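/- Let (X,d) be a proper, unbounded metric space, N ≥ 2, λ ∈ Δ_N, ν = (ν₁,…,ν_N) ∈ 𝒫₁(X)^N, and let J ⊆ {1,…,N} satisfy ∑_{j∈J} λⱼ ≥ 1/2. Then for every R > 0 there exists a corrupted collection μ = (μ₁,…,μ_N) ∈ 𝒫₁(X)^N with μₖ = νₖ for all k ∉ J, and a median μ* ∈ Med_λ(μ), such that W₁(μ*, ν*) > R for every ν* ∈ Med_λ(ν). (Indeed, one may take μⱼ = δ_{x} for all j ∈ J with d(x,x₀) sufficiently large, in which case δ_x ∈ Med_λ(μ).) -/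
import Mathlib


open MeasureTheory Filter Topology
open scoped ENNReal NNReal

/-- The set of couplings (transport plans): Borel probability measures on `X × X`
with first marginal `μ` and second marginal `ν`. -/
def Couplings {X : Type*} [MeasurableSpace X] (μ ν : Measure X) :
    Set (Measure (X × X)) :=
  {γ | IsProbabilityMeasure γ ∧ γ.map Prod.fst = μ ∧ γ.map Prod.snd = ν}

/-- The Wasserstein distance of order `1` between two measures on a metric space:
the infimum over couplings `γ` of `∫ d(x,y) dγ`. -/
noncomputable def W1 {X : Type*} [MetricSpace X] [MeasurableSpace X]
    (μ ν : Measure X) : ℝ :=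
  (⨅ γ ∈ Couplings μ ν, ∫⁻ p, edist p.1 p.2 ∂γ).toReal

/-- `𝒫₁(X)`: Borel probability measures on `X` with finite first moment. -/
def P1 (X : Type*) [MetricSpace X] [MeasurableSpace X] : Set (Measure X) :=
  {μ | IsProbabilityMeasure μ ∧ ∀ x₀ : X, Integrable (fun x => dist x₀ x) μ}

/-- `λ` belongs to the simplex `Δ_N`: nonnegative weights summing to `1`. -/
def memSimplex {N : ℕ} (l : Fin N → ℝ) : Prop :=
  (∀ i, 0 ≤ l i) ∧ ∑ i, l i = 1

/-- The dispersion functional `μ ↦ ∑ᵢ λᵢ W₁(νᵢ, μ)`. -/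
noncomputable def medCost {X : Type*} [MetricSpace X] [MeasurableSpace X] {N : ℕ}
    (l : Fin N → ℝ) (ν : Fin N → Measure X) (μ : Measure X) : ℝ :=
  ∑ i, l i * W1 (ν i) μ

/-- The set of Wasserstein medians of `ν₁, …, ν_N` with weights `λ`:
minimizers over `𝒫₁(X)` of the dispersion functional. -/
def Med {X : Type*} [MetricSpace X] [MeasurableSpace X] {N : ℕ}
    (l : Fin N → ℝ) (ν : Fin N → Measure X) : Set (Measure X) :=
  {μ | μ ∈ P1 X ∧ ∀ ρ ∈ P1 X, medCost l ν μ ≤ medCost l ν ρ}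

set_option linter.unusedSectionVars false
set_option linter.unusedVariables false
namespace MB

variable {X : Type*} [MetricSpace X] [MeasurableSpace X] [BorelSpace X]
  [SecondCountableTopology X]

lemma hme (x₀ : X) : Measurable (fun u : X => edist x₀ u) := by fun_prop

/-- ennreal W1 -/
noncomputable def W1e (μ ν : Measure X) : ℝ≥0∞ :=
  ⨅ γ ∈ Couplings μ ν, ∫⁻ p, edist p.1 p.2 ∂γ

lemma W1_eq (μ ν : Measure X) : W1 μ ν = (W1e μ ν).toReal := rfl

lemma prod_mem_couplings (μ ν : Measure X) [IsProbabilityMeasure μ]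
    [IsProbabilityMeasure ν] : μ.prod ν ∈ Couplings μ ν := by
  refine ⟨inferInstance, ?_, ?_⟩
  · simp [Measure.map_fst_prod]
  · simp [Measure.map_snd_prod]

lemma lint_fst {μ ν : Measure X} {γ : Measure (X × X)} (hγ : γ ∈ Couplings μ ν)
    {g : X → ℝ≥0∞} (hg : Measurable g) : ∫⁻ p, g p.1 ∂γ = ∫⁻ u, g u ∂μ := by
  rw [← hγ.2.1, lintegral_map hg measurable_fst]

lemma lint_snd {μ ν : Measure X} {γ : Measure (X × X)} (hγ : γ ∈ Couplings μ ν)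
    {g : X → ℝ≥0∞} (hg : Measurable g) : ∫⁻ p, g p.2 ∂γ = ∫⁻ u, g u ∂ν := by
  rw [← hγ.2.2, lintegral_map hg measurable_snd]

lemma medist_lt_top {μ : Measure X} (hμ : μ ∈ P1 X) (x₀ : X) :
    ∫⁻ y, edist x₀ y ∂μ < ∞ := by
  have := (hμ.2 x₀).lintegral_lt_top
  simpa [edist_dist] using this

/-- all couplings with a dirac first marginal have the same cost -/
lemma cost_dirac_left {ρ : Measure X} {x : X} {γ : Measure (X × X)}
    (hγ : γ ∈ Couplings (Measure.dirac x) ρ) :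
    ∫⁻ p, edist p.1 p.2 ∂γ = ∫⁻ y, edist x y ∂ρ := by
  have hae : ∀ᵐ p ∂γ, p.1 = x := by
    have h0 : γ {p : X × X | p.1 ≠ x} = 0 := by
      have : γ (Prod.fst ⁻¹' ({x}ᶜ : Set X)) = (γ.map Prod.fst) {x}ᶜ := by
        rw [Measure.map_apply measurable_fst (measurableSet_singleton x).compl]
      have h2 : (γ.map Prod.fst) ({x}ᶜ : Set X) = 0 := by
        rw [hγ.2.1, Measure.dirac_apply' _ (measurableSet_singleton x).compl]
        simp
      simpa [Set.preimage, Set.mem_compl_iff] using this.trans h2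
    exact (ae_iff).2 (by simpa using h0)
  calc ∫⁻ p, edist p.1 p.2 ∂γ = ∫⁻ p, edist x p.2 ∂γ := by
        apply lintegral_congr_ae
        filter_upwards [hae] with p hp
        rw [hp]
    _ = ∫⁻ y, edist x y ∂ρ := lint_snd hγ ((hme _))

lemma W1e_dirac_left (ρ : Measure X) [IsProbabilityMeasure ρ] (x : X) :
    W1e (Measure.dirac x) ρ = ∫⁻ y, edist x y ∂ρ := by
  apply le_antisymm
  · exact (biInf_le _ (prod_mem_couplings _ _)).trans_eq
      (cost_dirac_left (prod_mem_couplings _ _))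
  · exact le_iInf₂ fun γ hγ => (cost_dirac_left hγ).ge

lemma cost_dirac_right {ρ : Measure X} {x : X} {γ : Measure (X × X)}
    (hγ : γ ∈ Couplings ρ (Measure.dirac x)) :
    ∫⁻ p, edist p.1 p.2 ∂γ = ∫⁻ y, edist x y ∂ρ := by
  have hae : ∀ᵐ p ∂γ, p.2 = x := by
    have h0 : γ {p : X × X | p.2 ≠ x} = 0 := by
      have : γ (Prod.snd ⁻¹' ({x}ᶜ : Set X)) = (γ.map Prod.snd) {x}ᶜ := by
        rw [Measure.map_apply measurable_snd (measurableSet_singleton x).compl]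
      have h2 : (γ.map Prod.snd) ({x}ᶜ : Set X) = 0 := by
        rw [hγ.2.2, Measure.dirac_apply' _ (measurableSet_singleton x).compl]
        simp
      simpa [Set.preimage, Set.mem_compl_iff] using this.trans h2
    exact (ae_iff).2 (by simpa using h0)
  calc ∫⁻ p, edist p.1 p.2 ∂γ = ∫⁻ p, edist x p.1 ∂γ := by
        apply lintegral_congr_ae
        filter_upwards [hae] with p hp
        rw [hp, edist_comm]
    _ = ∫⁻ y, edist x y ∂ρ := lint_fst hγ ((hme _))

lemma W1e_dirac_right (ρ : Measure X) [IsProbabilityMeasure ρ] (x : X) :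
    W1e ρ (Measure.dirac x) = ∫⁻ y, edist x y ∂ρ := by
  apply le_antisymm
  · exact (biInf_le _ (prod_mem_couplings _ _)).trans_eq
      (cost_dirac_right (prod_mem_couplings _ _))
  · exact le_iInf₂ fun γ hγ => (cost_dirac_right hγ).ge

lemma le_add_biInf {ι : Type*} {s : Set ι} (hs : s.Nonempty) {a b : ℝ≥0∞}
    {f : ι → ℝ≥0∞} (h : ∀ γ ∈ s, b ≤ a + f γ) : b ≤ a + ⨅ γ ∈ s, f γ := by
  rw [ENNReal.add_iInf]
  refine le_iInf fun γ => ?_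
  rw [ENNReal.add_iInf]
  exact le_iInf fun hγ => h γ hγ

/-- second-marginal moment ≤ first-marginal moment + W1e -/
lemma moment_snd_le {μ ν : Measure X} [IsProbabilityMeasure μ]
    [IsProbabilityMeasure ν] (x₀ : X) :
    ∫⁻ y, edist x₀ y ∂ν ≤ (∫⁻ u, edist x₀ u ∂μ) + W1e μ ν := by
  refine le_add_biInf ⟨_, prod_mem_couplings μ ν⟩ fun γ hγ => ?_
  calc ∫⁻ y, edist x₀ y ∂ν = ∫⁻ p, edist x₀ p.2 ∂γ :=
        (lint_snd hγ ((hme _))).symm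
    _ ≤ ∫⁻ p, (edist x₀ p.1 + edist p.1 p.2) ∂γ :=
        lintegral_mono fun p => edist_triangle _ _ _
    _ = (∫⁻ p, edist x₀ p.1 ∂γ) + ∫⁻ p, edist p.1 p.2 ∂γ :=
        lintegral_add_left (((hme _)).comp measurable_fst) _
    _ = (∫⁻ u, edist x₀ u ∂μ) + ∫⁻ p, edist p.1 p.2 ∂γ := by
        rw [lint_fst hγ ((hme _))]

/-- first-marginal moment ≤ second-marginal moment + W1e -/
lemma moment_fst_le {μ ν : Measure X} [IsProbabilityMeasure μ]
    [IsProbabilityMeasure ν] (x₀ : X) :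
    ∫⁻ u, edist x₀ u ∂μ ≤ (∫⁻ y, edist x₀ y ∂ν) + W1e μ ν := by
  refine le_add_biInf ⟨_, prod_mem_couplings μ ν⟩ fun γ hγ => ?_
  calc ∫⁻ u, edist x₀ u ∂μ = ∫⁻ p, edist x₀ p.1 ∂γ :=
        (lint_fst hγ ((hme _))).symm
    _ ≤ ∫⁻ p, (edist x₀ p.2 + edist p.1 p.2) ∂γ := by
        refine lintegral_mono fun p => ?_
        calc edist x₀ p.1 ≤ edist x₀ p.2 + edist p.2 p.1 := edist_triangle _ _ _
          _ = edist x₀ p.2 + edist p.1 p.2 := by rw [edist_comm p.2 p.1]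
    _ = (∫⁻ p, edist x₀ p.2 ∂γ) + ∫⁻ p, edist p.1 p.2 ∂γ :=
        lintegral_add_left (((hme _)).comp measurable_snd) _
    _ = (∫⁻ y, edist x₀ y ∂ν) + ∫⁻ p, edist p.1 p.2 ∂γ := by
        rw [lint_snd hγ ((hme _))]

lemma W1e_lt_top {μ ν : Measure X} (hμ : μ ∈ P1 X) (hν : ν ∈ P1 X) (x₀ : X) :
    W1e μ ν < ∞ := by
  have hμp := hμ.1; have hνp := hν.1
  have h1 : W1e μ ν ≤ ∫⁻ p, edist p.1 p.2 ∂(μ.prod ν) :=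
    biInf_le _ (prod_mem_couplings μ ν)
  have h2 : ∫⁻ p, edist p.1 p.2 ∂(μ.prod ν)
      ≤ (∫⁻ u, edist x₀ u ∂μ) + ∫⁻ y, edist x₀ y ∂ν := by
    calc ∫⁻ p, edist p.1 p.2 ∂(μ.prod ν)
        ≤ ∫⁻ p, (edist x₀ p.1 + edist x₀ p.2) ∂(μ.prod ν) := by
          refine lintegral_mono fun p => ?_
          calc edist p.1 p.2 ≤ edist p.1 x₀ + edist x₀ p.2 := edist_triangle _ _ _
            _ = edist x₀ p.1 + edist x₀ p.2 := by rw [edist_comm p.1 x₀]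
      _ = (∫⁻ p, edist x₀ p.1 ∂(μ.prod ν)) + ∫⁻ p, edist x₀ p.2 ∂(μ.prod ν) :=
          lintegral_add_left (((hme _)).comp measurable_fst) _
      _ = (∫⁻ u, edist x₀ u ∂μ) + ∫⁻ y, edist x₀ y ∂ν := by
          rw [lint_fst (prod_mem_couplings μ ν) ((hme _)),
            lint_snd (prod_mem_couplings μ ν) ((hme _))]
  exact (h1.trans h2).trans_lt
    (ENNReal.add_lt_top.2 ⟨medist_lt_top hμ x₀, medist_lt_top hν x₀⟩)

lemma dirac_mem_P1 (x : X) : Measure.dirac x ∈ P1 X := by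
  refine ⟨inferInstance, fun x₀ => ?_⟩
  constructor
  · exact (continuous_const.dist continuous_id).aestronglyMeasurable
  · rw [HasFiniteIntegral]
    rw [lintegral_dirac]
    exact ENNReal.coe_lt_top

end MB

open MB in
/-- On an unbounded proper metric space, if `∑_{j∈J} λⱼ ≥ 1/2` then
for every `R > 0` one can corrupt the sample measures with indices in `J` (leaving the
others untouched) so that some median of the corrupted collection is at `W₁`-distance
greater than `R` from every median of the original collection; indeed one can take the
corrupted measures to be a common Dirac mass, which is then itself a median. -/
theorem median_breakdown_above_half
    {X : Type*} [MetricSpace X] [ProperSpace X] [MeasurableSpace X] [BorelSpace X]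
    (hub : ¬ Bornology.IsBounded (Set.univ : Set X))
    {N : ℕ} (hN : 2 ≤ N) {l : Fin N → ℝ} (hl : memSimplex l)
    {ν : Fin N → Measure X} (hν : ∀ i, ν i ∈ P1 X)
    (J : Finset (Fin N)) (hJ : 1 / 2 ≤ ∑ j ∈ J, l j) :
    ∀ R > (0 : ℝ), ∃ (μ : Fin N → Measure X) (μstar : Measure X),
      (∀ i, μ i ∈ P1 X) ∧
      (∀ k, k ∉ J → μ k = ν k) ∧
      μstar ∈ Med l μ ∧
      (∀ νstar ∈ Med l ν, R < W1 μstar νstar) ∧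
      ∃ x : X, μstar = Measure.dirac x ∧ ∀ j ∈ J, μ j = Measure.dirac x := by
  classical
  intro R hR
  -- X is nonempty
  have hXne : Nonempty X := by
    by_contra h
    rw [not_nonempty_iff] at h
    exact hub (by rw [Set.univ_eq_empty_iff.2 h]; exact Bornology.isBounded_empty)
  obtain ⟨x₀⟩ := hXne
  -- an index with positive weight
  obtain ⟨i₀, hi₀⟩ : ∃ i, 0 < l i := by
    by_contra h
    push_neg at h
    have : ∑ i, l i = 0 :=
      Finset.sum_eq_zero fun i _ => le_antisymm (h i) (hl.1 i)
    rw [hl.2] at this; norm_num at this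
  have hW1nn : ∀ (μ' ν' : Measure X), 0 ≤ W1 μ' ν' := fun _ _ => ENNReal.toReal_nonneg
  set C := medCost l ν (ν i₀) with hC
  set M := (∫⁻ y, edist x₀ y ∂(ν i₀)).toReal + C / l i₀ with hM
  -- every median of ν has first moment bounded by M
  have hMed : ∀ ρ ∈ Med l ν, (∫⁻ y, edist x₀ y ∂ρ).toReal ≤ M := by
    intro ρ hρ
    have hρ1 : ρ ∈ P1 X := hρ.1
    haveI := hρ1.1
    haveI := (hν i₀).1
    have h1 : l i₀ * W1 (ν i₀) ρ ≤ C := by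
      calc l i₀ * W1 (ν i₀) ρ ≤ medCost l ν ρ :=
            Finset.single_le_sum (f := fun i => l i * W1 (ν i) ρ)
              (fun i _ => mul_nonneg (hl.1 i) (hW1nn _ _)) (Finset.mem_univ i₀)
        _ ≤ C := hρ.2 (ν i₀) (hν i₀)
      
    have hW : W1 (ν i₀) ρ ≤ C / l i₀ := by
      rw [le_div_iff₀ hi₀]; linarith [h1, mul_comm (W1 (ν i₀) ρ) (l i₀)]
    have hB := moment_snd_le (μ := ν i₀) (ν := ρ) x₀
    have hA : (∫⁻ u, edist x₀ u ∂(ν i₀)) ≠ ∞ := (medist_lt_top (hν i₀) x₀).ne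
    have hE : W1e (ν i₀) ρ ≠ ∞ := (W1e_lt_top (hν i₀) hρ1 x₀).ne
    have h2 := ENNReal.toReal_mono (by simp [ENNReal.add_ne_top, hA, hE]) hB
    rw [ENNReal.toReal_add hA hE] at h2
    rw [hM]
    calc (∫⁻ y, edist x₀ y ∂ρ).toReal
        ≤ (∫⁻ u, edist x₀ u ∂(ν i₀)).toReal + (W1e (ν i₀) ρ).toReal := h2
      _ ≤ (∫⁻ u, edist x₀ u ∂(ν i₀)).toReal + C / l i₀ := by
          have : (W1e (ν i₀) ρ).toReal = W1 (ν i₀) ρ := (W1_eq _ _).symm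
          rw [this]; linarith
  -- pick a far-away point x
  obtain ⟨x, hx⟩ : ∃ x : X, R + M < dist x x₀ := by
    by_contra h
    push_neg at h
    exact hub ((Metric.isBounded_iff_subset_closedBall x₀).2
      ⟨R + M, fun y _ => Metric.mem_closedBall.2 (h y)⟩)
  set μ : Fin N → Measure X := fun i => if i ∈ J then Measure.dirac x else ν i with hμdef
  refine ⟨μ, Measure.dirac x, ?_, ?_, ?_, ?_, x, rfl, fun j hj => if_pos hj⟩
  · intro i
    by_cases hi : i ∈ J
    · simp only [hμdef, if_pos hi]; exact dirac_mem_P1 x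
    · simp only [hμdef, if_neg hi]; exact hν i
  · intro k hk; simp only [hμdef, if_neg hk]
  · -- dirac x is a median of μ
    refine ⟨dirac_mem_P1 x, fun ρ hρ => ?_⟩
    haveI := hρ.1
    set t := (∫⁻ y, edist x y ∂ρ).toReal with htdef
    have ht0 : 0 ≤ t := ENNReal.toReal_nonneg
    have hWdl : W1 (Measure.dirac x) ρ = t := by rw [W1_eq, W1e_dirac_left]
    have hWdd : W1 (Measure.dirac x) (Measure.dirac x) = 0 := by
      rw [W1_eq, W1e_dirac_left, lintegral_dirac]; simp
    -- per-index bound for i ∉ J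
    have hterm : ∀ i ∉ J, W1 (ν i) (Measure.dirac x) ≤ W1 (ν i) ρ + t := by
      intro i _
      haveI := (hν i).1
      have h1 : W1 (ν i) (Measure.dirac x) = (∫⁻ u, edist x u ∂(ν i)).toReal := by
        rw [W1_eq, W1e_dirac_right]
      have h2 := moment_fst_le (μ := ν i) (ν := ρ) x
      have hAi : (∫⁻ y, edist x y ∂ρ) ≠ ∞ := (medist_lt_top hρ x).ne
      have hEi : W1e (ν i) ρ ≠ ∞ := (W1e_lt_top (hν i) hρ x).ne
      have h3 := ENNReal.toReal_mono (by simp [ENNReal.add_ne_top, hAi, hEi]) h2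
      rw [ENNReal.toReal_add hAi hEi] at h3
      rw [h1]
      have : (W1e (ν i) ρ).toReal = W1 (ν i) ρ := (W1_eq _ _).symm
      rw [this] at h3
      linarith
    have hs : ∑ j ∈ J, l j + ∑ j ∈ Jᶜ, l j = 1 := by
      rw [Finset.sum_add_sum_compl]; exact hl.2
    have hs' : ∑ j ∈ Jᶜ, l j ≤ ∑ j ∈ J, l j := by linarith
    have hsum1 : medCost l μ (Measure.dirac x)
        = ∑ i ∈ Jᶜ, l i * W1 (ν i) (Measure.dirac x) := by
      rw [medCost, ← Finset.sum_add_sum_compl J]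
      have hz : ∑ i ∈ J, l i * W1 (μ i) (Measure.dirac x) = 0 :=
        Finset.sum_eq_zero fun i hi => by
          simp only [hμdef, if_pos hi, hWdd, mul_zero]
      rw [hz, zero_add]
      exact Finset.sum_congr rfl fun i hi => by
        rw [hμdef]; simp only [if_neg (Finset.mem_compl.1 hi)]
    have hsum2 : medCost l μ ρ
        = (∑ j ∈ J, l j) * t + ∑ i ∈ Jᶜ, l i * W1 (ν i) ρ := by
      rw [medCost, ← Finset.sum_add_sum_compl J]
      congr 1
      · rw [Finset.sum_mul]
        exact Finset.sum_congr rfl fun i hi => by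
          simp only [hμdef, if_pos hi, hWdl]
      · exact Finset.sum_congr rfl fun i hi => by
          rw [hμdef]; simp only [if_neg (Finset.mem_compl.1 hi)]
    rw [hsum1, hsum2]
    calc ∑ i ∈ Jᶜ, l i * W1 (ν i) (Measure.dirac x)
        ≤ ∑ i ∈ Jᶜ, (l i * W1 (ν i) ρ + l i * t) := by
          refine Finset.sum_le_sum fun i hi => ?_
          have := hterm i (Finset.mem_compl.1 hi)
          have h4 := mul_le_mul_of_nonneg_left this (hl.1 i)
          rw [mul_add] at h4; exact h4
      _ = (∑ i ∈ Jᶜ, l i * W1 (ν i) ρ) + (∑ j ∈ Jᶜ, l j) * t := by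
          rw [Finset.sum_add_distrib, Finset.sum_mul]
      _ ≤ (∑ i ∈ Jᶜ, l i * W1 (ν i) ρ) + (∑ j ∈ J, l j) * t := by
          have := mul_le_mul_of_nonneg_right hs' ht0
          linarith
      _ = (∑ j ∈ J, l j) * t + ∑ i ∈ Jᶜ, l i * W1 (ν i) ρ := by ring
  · -- every median of ν is far from dirac x
    intro ρ hρ
    have hρ1 : ρ ∈ P1 X := hρ.1
    haveI := hρ1.1
    have hMρ := hMed ρ hρ
    have hW : W1 (Measure.dirac x) ρ = (∫⁻ y, edist x y ∂ρ).toReal := by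
      rw [W1_eq, W1e_dirac_left]
    have hkey : edist x x₀ ≤ (∫⁻ y, edist x y ∂ρ) + ∫⁻ y, edist x₀ y ∂ρ := by
      calc edist x x₀ = ∫⁻ _, edist x x₀ ∂ρ := by
            rw [lintegral_const, measure_univ, mul_one]
        _ ≤ ∫⁻ y, (edist x y + edist x₀ y) ∂ρ := by
            refine lintegral_mono fun y => ?_
            calc edist x x₀ ≤ edist x y + edist y x₀ := edist_triangle _ _ _
              _ = edist x y + edist x₀ y := by rw [edist_comm y x₀]
        _ = (∫⁻ y, edist x y ∂ρ) + ∫⁻ y, edist x₀ y ∂ρ :=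
            lintegral_add_left (hme x) _
    have hfin1 : (∫⁻ y, edist x y ∂ρ) ≠ ∞ := (medist_lt_top hρ1 x).ne
    have hfin2 : (∫⁻ y, edist x₀ y ∂ρ) ≠ ∞ := (medist_lt_top hρ1 x₀).ne
    have h5 := ENNReal.toReal_mono (by simp [ENNReal.add_ne_top, hfin1, hfin2]) hkey
    rw [ENNReal.toReal_add hfin1 hfin2] at h5
    rw [← dist_edist] at h5
    rw [hW]
    linarith
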